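/- arXiv:1305.0517 — 2 statements merged into one kernel-verified Lean document; each statement's English description precedes it below -/
import Mathlib

section
/- Let p, q, w be positive integers with gcd(p,q)=1 and let d = gcd(w,p). Then the abelian group presented by the 3×4 integer matrix with rows (w,0,0,−1), (0,1,−w,0), (0,0,p,q) (generators x1,x2,x3,x4, relations given by rows) has the property that the element (w²q/d)·x1 + (p/d)·x2 generates the kernel of the natural map from the subgroup generated by x1 and x2 into the quotient group. Equivalently: in the quotient group, an integer combination m·x1 + n·x2 vanishes if and only if (m,n) is an integer multiple of (w²q/d, p/d). -/
/-- The algebraic core of Lemma 2.4 of Greene–Ni: in the abelian group presented by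
the 3×4 matrix with rows (w,0,0,−1), (0,1,−w,0), (0,0,p,q), a combination m·x₁ + n·x₂
vanishes iff (m,n) is an integer multiple of (w²q/d, p/d), where d = gcd(w,p). -/
theorem stmt0 (p q w : ℕ) (hp : 0 < p) (hq : 0 < q) (hw : 0 < w)
    (hpq : Nat.Coprime p q) (d : ℕ) (hd : d = Nat.gcd w p) (m n : ℤ) :
    (m • (Pi.single 0 1 : Fin 4 → ℤ) + n • (Pi.single 1 1 : Fin 4 → ℤ) ∈
      Submodule.span ℤ
        ({![(w : ℤ), 0, 0, -1], ![0, 1, -(w : ℤ), 0], ![0, 0, (p : ℤ), (q : ℤ)]} :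
          Set (Fin 4 → ℤ)))
    ↔ ∃ t : ℤ, m = t * ((w ^ 2 * q / d : ℕ) : ℤ) ∧ n = t * ((p / d : ℕ) : ℤ) := by
  subst hd
  set d := Nat.gcd w p with hd
  have hd0 : 0 < d := Nat.gcd_pos_of_pos_left _ hw
  set w' := w / d with hw'
  set p' := p / d with hp'
  have hdw : d * w' = w := Nat.mul_div_cancel' (Nat.gcd_dvd_left w p)
  have hdp : d * p' = p := Nat.mul_div_cancel' (Nat.gcd_dvd_right w p)
  have hp'0 : 0 < p' := by exact Nat.div_pos (Nat.le_of_dvd hp (Nat.gcd_dvd_right w p)) hd0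
  have hcop : Nat.Coprime w' p' := Nat.coprime_div_gcd_div_gcd hd0
  have hdivkey : (w ^ 2 * q / d : ℕ) = w' * (w * q) := by
    apply Nat.div_eq_of_eq_mul_left hd0
    calc w ^ 2 * q = (d * w') * w * q := by rw [hdw]; ring
      _ = w' * (w * q) * d := by ring
  constructor
  · intro h
    rw [Submodule.mem_span_insert] at h
    obtain ⟨a, x, hx, hax⟩ := h
    rw [Submodule.mem_span_insert] at hx
    obtain ⟨b, y, hy, hby⟩ := hx
    rw [Submodule.mem_span_singleton] at hy
    obtain ⟨c, rfl⟩ := hy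
    subst hby
    have h0 := congrFun hax 0
    have h1 := congrFun hax 1
    have h2 := congrFun hax 2
    have h3 := congrFun hax 3
    simp [Pi.single_apply] at h0 h1 h2 h3
    have hdZ : (d:ℤ) ≠ 0 := by exact_mod_cast hd0.ne'
    have hp'Z : (p':ℤ) ≠ 0 := by exact_mod_cast hp'0.ne'
    have hZw : (w:ℤ) = (d:ℤ) * (w':ℤ) := by exact_mod_cast hdw.symm
    have hZp : (p:ℤ) = (d:ℤ) * (p':ℤ) := by exact_mod_cast hdp.symm
    have key : n * (w':ℤ) = c * (p':ℤ) := by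
      apply mul_left_cancel₀ hdZ
      calc (d:ℤ) * (n * w') = n * ((d:ℤ) * w') := by ring
        _ = n * w := by rw [← hZw]
        _ = c * p := by rw [h1]; linarith [h2]
        _ = (d:ℤ) * (c * p') := by rw [hZp]; ring
    have hcopZ : IsCoprime ((p':ℕ):ℤ) ((w':ℕ):ℤ) := by
      rw [Int.isCoprime_iff_gcd_eq_one, Int.gcd_natCast_natCast]
      exact hcop.symm
    have hdvd : ((p':ℕ):ℤ) ∣ n := hcopZ.dvd_of_dvd_mul_right ⟨c, by linarith [key]⟩
    obtain ⟨t, rfl⟩ := hdvd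
    have hc : c = t * (w':ℤ) := by
      apply mul_left_cancel₀ hp'Z
      calc (p':ℤ) * c = (p':ℤ) * t * (w':ℤ) := by linarith [key]
        _ = (p':ℤ) * (t * w') := by ring
    refine ⟨t, ?_, by ring⟩
    rw [hdivkey]
    push_cast
    rw [h0, show a = c * q by linarith [h3], hc]
    ring
  · rintro ⟨t, hm, hn⟩
    refine Submodule.mem_span_insert.2 ⟨t * w' * q, _, Submodule.mem_span_insert.2
      ⟨n, _, Submodule.mem_span_singleton.2 ⟨t * w', rfl⟩, rfl⟩, ?_⟩
    funext i
    fin_cases i <;>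
      simp [Pi.single_apply, hm, hn, hdivkey] <;>
      push_cast [← hdw, ← hdp] <;> ring
end

section
/- Let m, n ≥ 2 and let p, q be coprime positive integers with p/q ≥ m²n. Then |pmn − q(mn)²| · (1 − 1/(mn) − 1/(p − qmn)) = |pn − q(mn)²| · (1 − 1/n) + |pmn − qm²n| · (1 − 1/m − 1/(p − qm)), where both sides are interpreted as rational numbers (assuming p − qmn > 0 and p − qm > 0). -/
/-!
Under `q m² n ≤ p` the three integers in absolute value are nonnegative and factor as
`mn (p - qmn)`, `n (p - q m² n)` and `mn (p - qm)`. Each term then has the shape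
`a b (1 - 1/a - 1/b) = (a - 1)(b - 1) - 1`, and the claim becomes a polynomial identity.
-/

theorem mul_mul_one_sub_one_div_sub_one_div {K : Type*} [Field K] {a b : K} (ha : a ≠ 0)
    (hb : b ≠ 0) : a * b * (1 - 1 / a - 1 / b) = (a - 1) * (b - 1) - 1 := by
  field_simp
  ring

theorem cable_norm_identity {K : Type*} [Field K] {m n p q : K} (hm : m ≠ 0) (hn : n ≠ 0)
    (h1 : p - q * (m * n) ≠ 0) (h2 : p - q * m ≠ 0) :
    m * n * (p - q * (m * n)) * (1 - 1 / (m * n) - 1 / (p - q * (m * n))) =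
      n * (p - q * m ^ 2 * n) * (1 - 1 / n) +
      m * n * (p - q * m) * (1 - 1 / m - 1 / (p - q * m)) := by
  have hmn := mul_mul_one_sub_one_div_sub_one_div (mul_ne_zero hm hn) h1
  have hm' := mul_mul_one_sub_one_div_sub_one_div hm h2
  have hn' : n * (1 - 1 / n) = n - 1 := by field_simp
  linear_combination hmn - n * hm' - (p - q * m ^ 2 * n) * hn'

theorem stmt2_general (m n p q : ℕ) (hm : 2 ≤ m) (hn : 2 ≤ n)
    (hq : 0 < q)
    (h : (m : ℚ) ^ 2 * n ≤ (p : ℚ) / q)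
    (h1 : 0 < (p : ℚ) - q * (m * n)) (h2 : 0 < (p : ℚ) - q * m) :
    |(p : ℚ) * m * n - q * (m * n) ^ 2| *
        (1 - 1 / (m * n : ℚ) - 1 / ((p : ℚ) - q * (m * n))) =
      |(p : ℚ) * n - q * (m * n) ^ 2| * (1 - 1 / (n : ℚ)) +
      |(p : ℚ) * m * n - q * m ^ 2 * n| *
        (1 - 1 / (m : ℚ) - 1 / ((p : ℚ) - q * m)) := by
  have hm0 : (0 : ℚ) < m := by exact_mod_cast (show 0 < m by omega)
  have hn0 : (0 : ℚ) < n := by exact_mod_cast (show 0 < n by omega)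
  have hqp : (m : ℚ) ^ 2 * n * q ≤ p := (le_div_iff₀ (by exact_mod_cast hq)).mp h
  have hmn : (0 : ℚ) ≤ m * n := by positivity
  rw [show (p : ℚ) * m * n - q * (m * n) ^ 2 = m * n * (p - q * (m * n)) by ring,
    show (p : ℚ) * n - q * (m * n) ^ 2 = n * (p - q * m ^ 2 * n) by ring,
    show (p : ℚ) * m * n - q * m ^ 2 * n = m * n * (p - q * m) by ring,
    abs_of_nonneg (mul_nonneg hmn h1.le), abs_of_nonneg (mul_nonneg hmn h2.le),
    abs_of_nonneg (mul_nonneg hn0.le (by linarith [hqp]))]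
  exact cable_norm_identity hm0.ne' hn0.ne' h1.ne' h2.ne'

/-- The key norm computation of Section 2 of Greene–Ni: for m, n ≥ 2 and coprime
positive p, q with p/q ≥ m²n, the norm of the minimal surface for the torus knot
T(1,mn) equals the norm for the (1,n)-cable of the (1,m)-torus knot. -/
theorem stmt2 (m n p q : ℕ) (hm : 2 ≤ m) (hn : 2 ≤ n)
    (hp : 0 < p) (hq : 0 < q) (hpq : Nat.Coprime p q)
    (h : (m : ℚ) ^ 2 * n ≤ (p : ℚ) / q)
    (h1 : 0 < (p : ℚ) - q * (m * n)) (h2 : 0 < (p : ℚ) - q * m) :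
    |(p : ℚ) * m * n - q * (m * n) ^ 2| *
        (1 - 1 / (m * n : ℚ) - 1 / ((p : ℚ) - q * (m * n))) =
      |(p : ℚ) * n - q * (m * n) ^ 2| * (1 - 1 / (n : ℚ)) +
      |(p : ℚ) * m * n - q * m ^ 2 * n| *
        (1 - 1 / (m : ℚ) - 1 / ((p : ℚ) - q * m)) :=
  stmt2_general m n p q hm hn hq h h1 h2
end
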